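/- arXiv:1011.6313 — 2 statements merged into one kernel-verified Lean document; each statement's English description precedes it below -/
import Mathlib

section
/- For positive definite matrices A, B and ν ∈ [0,1], the Heinz mean satisfies the angle in-betweenness inequality: trace(B²) · (trace(A^(1+ν)·B^(1-ν)))² ≥ trace(A^(2ν)·B^(2(1-ν))) · (trace(AB))². -/
open Matrix MeasureTheory
open scoped ComplexOrder

/-- Apply a real function to a Hermitian matrix via the spectral decomposition. -/
noncomputable def matFun {n : ℕ} (A : Matrix (Fin n) (Fin n) ℂ) (hA : A.IsHermitian)
    (g : ℝ → ℝ) : Matrix (Fin n) (Fin n) ℂ :=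
  (hA.eigenvectorUnitary : Matrix (Fin n) (Fin n) ℂ) *
    Matrix.diagonal (fun i => (g (hA.eigenvalues i) : ℂ)) *
    star (hA.eigenvectorUnitary : Matrix (Fin n) (Fin n) ℂ)

/-- Real power of a Hermitian matrix via the spectral decomposition. -/
noncomputable def mpow {n : ℕ} (A : Matrix (Fin n) (Fin n) ℂ) (hA : A.IsHermitian)
    (p : ℝ) : Matrix (Fin n) (Fin n) ℂ :=
  matFun A hA (fun x => x ^ p)

/-- Hilbert-Schmidt (Frobenius) norm of a matrix. -/
noncomputable def frob {n : ℕ} (X : Matrix (Fin n) (Fin n) ℂ) : ℝ :=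
  Real.sqrt (Matrix.trace (star X * X)).re

/-!
Diagonalise `A = ∑ aᵢ uᵢuᵢ*` and `B = ∑ bⱼ vⱼvⱼ*`. Then
`tr (A^t B^(2-t)) = ∑ᵢⱼ wᵢⱼ xᵢⱼ^t` with `wᵢⱼ = |⟨uᵢ, vⱼ⟩|² bⱼ² ≥ 0` and `xᵢⱼ = aᵢ / bⱼ > 0`,
and the four traces are these moments at `t = 2ν, 1, 0, 1 + ν`. For such moments,
Cauchy–Schwarz gives `(∑ w x)² ≤ (∑ w x^(1+ν)) (∑ w x^(1-ν))`, and the weighted Chebyshev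
inequality for the similarly ordered `x^(2ν)` and `x^(1-ν)` gives
`(∑ w x^(2ν)) (∑ w x^(1-ν)) ≤ (∑ w) (∑ w x^(1+ν))`; multiplying the two yields the claim.
-/

section WeightedSums

open Finset

variable {ι : Type*} [Fintype ι]

theorem Monovary.weighted_sum_mul_sum_le {f g : ι → ℝ}
    (hfg : Monovary f g) (w : ι → ℝ) (hw : ∀ i, 0 ≤ w i) :
    (∑ i, w i * f i) * (∑ i, w i * g i) ≤ (∑ i, w i) * ∑ i, w i * (f i * g i) := by
  have sum_mul_sum_eq (u v : ι → ℝ) :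
      (∑ i, w i * u i) * (∑ j, w j * v j) = ∑ i, ∑ j, w i * w j * (u i * v j) := by
    rw [sum_mul_sum]
    exact sum_congr rfl fun i _ => sum_congr rfl fun j _ => by ring
  -- The factors `1` make both sides double sums of the shape `sum_mul_sum_eq` folds.
  have key : ∑ i, ∑ j, w i * w j * (f i * g j + g i * f j) ≤
      ∑ i, ∑ j, w i * w j * ((f i * g i) * 1 + 1 * (f j * g j)) := by
    refine sum_le_sum fun i _ => sum_le_sum fun j _ => ?_
    refine mul_le_mul_of_nonneg_left ?_ (mul_nonneg (hw i) (hw j))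
    linarith [hfg.mul_add_mul_le_mul_add_mul i j]
  simp only [mul_add, sum_add_distrib, ← sum_mul_sum_eq] at key
  simp only [mul_one] at key
  linarith

theorem sum_mul_rpow_two_mul_mul_sq_sum_le (w x : ι → ℝ)
    (hw : ∀ i, 0 ≤ w i) (hx : ∀ i, 0 < x i) {ν : ℝ} (hν : ν ∈ Set.Icc (0 : ℝ) 1) :
    (∑ i, w i * x i ^ (2 * ν)) * (∑ i, w i * x i) ^ 2 ≤
      (∑ i, w i) * (∑ i, w i * x i ^ (1 + ν)) ^ 2 := by
  obtain ⟨hν0, hν1⟩ := hν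
  have hpow_nonneg (t : ℝ) : 0 ≤ ∑ i, w i * x i ^ t :=
    sum_nonneg fun i _ => mul_nonneg (hw i) (Real.rpow_nonneg (hx i).le t)
  have cauchy_schwarz :
      (∑ i, w i * x i) ^ 2 ≤ (∑ i, w i * x i ^ (1 + ν)) * ∑ i, w i * x i ^ (1 - ν) := by
    refine sum_sq_le_sum_mul_sum_of_sq_le_mul _ (fun i _ => ?_) (fun i _ => ?_) fun i _ => ?_
    · exact mul_nonneg (hw i) (Real.rpow_nonneg (hx i).le _)
    · exact mul_nonneg (hw i) (Real.rpow_nonneg (hx i).le _)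
    · rw [mul_mul_mul_comm, ← Real.rpow_add (hx i), add_add_sub_cancel, one_add_one_eq_two,
        Real.rpow_two, mul_pow, sq]
  have monovary : Monovary (fun i => x i ^ (2 * ν)) (fun i => x i ^ (1 - ν)) := fun i j hij =>
    Real.rpow_le_rpow (hx i).le
      (not_lt.mp fun hji => hij.not_ge (Real.rpow_le_rpow (hx j).le hji.le (by linarith)))
      (by linarith)
  have chebyshev :
      (∑ i, w i * x i ^ (2 * ν)) * (∑ i, w i * x i ^ (1 - ν)) ≤
        (∑ i, w i) * ∑ i, w i * x i ^ (1 + ν) := by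
    convert monovary.weighted_sum_mul_sum_le w hw using 4 with i
    rw [← Real.rpow_add (hx i)]
    ring_nf
  calc (∑ i, w i * x i ^ (2 * ν)) * (∑ i, w i * x i) ^ 2
      ≤ (∑ i, w i * x i ^ (2 * ν)) * ((∑ i, w i * x i ^ (1 + ν)) * ∑ i, w i * x i ^ (1 - ν)) :=
        mul_le_mul_of_nonneg_left cauchy_schwarz (hpow_nonneg _)
    _ = (∑ i, w i * x i ^ (2 * ν)) * (∑ i, w i * x i ^ (1 - ν)) * ∑ i, w i * x i ^ (1 + ν) := by
        ring
    _ ≤ (∑ i, w i) * (∑ i, w i * x i ^ (1 + ν)) * ∑ i, w i * x i ^ (1 + ν) :=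
        mul_le_mul_of_nonneg_right chebyshev (hpow_nonneg _)
    _ = (∑ i, w i) * (∑ i, w i * x i ^ (1 + ν)) ^ 2 := by ring

end WeightedSums

theorem Matrix.re_trace_diagonal_mul_mul_diagonal_mul_star {ι : Type*} [Fintype ι] [DecidableEq ι]
    (d e : ι → ℝ) (C : Matrix ι ι ℂ) :
    (trace (diagonal (fun i => (d i : ℂ)) * C * diagonal (fun j => (e j : ℂ)) * star C)).re =
      ∑ i, ∑ j, d i * e j * Complex.normSq (C i j) := by
  rw [trace, Complex.re_sum]
  refine Finset.sum_congr rfl fun i _ => ?_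
  rw [diag, mul_apply, Complex.re_sum]
  refine Finset.sum_congr rfl fun j _ => ?_
  rw [mul_diagonal, diagonal_mul, star_apply, RCLike.star_def]
  have hterm : (d i : ℂ) * C i j * e j * starRingEnd ℂ (C i j) =
      ((d i * e j * Complex.normSq (C i j) : ℝ) : ℂ) := by
    push_cast [← Complex.mul_conj]
    ring
  rw [hterm, Complex.ofReal_re]

section SpectralCalculus

variable {n : ℕ} {A B : Matrix (Fin n) (Fin n) ℂ}

theorem re_trace_matFun_mul_matFun (hA : A.IsHermitian) (hB : B.IsHermitian) (f g : ℝ → ℝ) :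
    (trace (matFun A hA f * matFun B hB g)).re =
      ∑ i, ∑ j, f (hA.eigenvalues i) * g (hB.eigenvalues j) *
        Complex.normSq ((star (hA.eigenvectorUnitary : Matrix (Fin n) (Fin n) ℂ) *
          (hB.eigenvectorUnitary : Matrix (Fin n) (Fin n) ℂ)) i j) := by
  have hcycle : trace (matFun A hA f * matFun B hB g) =
      trace (diagonal (fun i => (f (hA.eigenvalues i) : ℂ)) *
        (star (hA.eigenvectorUnitary : Matrix (Fin n) (Fin n) ℂ) *
          (hB.eigenvectorUnitary : Matrix (Fin n) (Fin n) ℂ)) *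
        diagonal (fun j => (g (hB.eigenvalues j) : ℂ)) *
        star (star (hA.eigenvectorUnitary : Matrix (Fin n) (Fin n) ℂ) *
          (hB.eigenvectorUnitary : Matrix (Fin n) (Fin n) ℂ))) := by
    simp only [matFun, star_mul, star_star, Matrix.mul_assoc]
    rw [trace_mul_comm]
    simp only [Matrix.mul_assoc]
  rw [hcycle, re_trace_diagonal_mul_mul_diagonal_mul_star]

theorem matFun_mul (hA : A.IsHermitian) (f g : ℝ → ℝ) :
    matFun A hA f * matFun A hA g = matFun A hA (fun x => f x * g x) := by
  have hUU : star (hA.eigenvectorUnitary : Matrix (Fin n) (Fin n) ℂ) * hA.eigenvectorUnitary = 1 :=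
    Unitary.star_mul_self_of_mem hA.eigenvectorUnitary.2
  simp only [matFun, Matrix.mul_assoc]
  rw [← Matrix.mul_assoc (star _), hUU, Matrix.one_mul, ← Matrix.mul_assoc (diagonal _),
    diagonal_mul_diagonal]
  push_cast
  rfl

theorem matFun_id (hA : A.IsHermitian) : matFun A hA (fun x => x) = A :=
  hA.spectral_theorem.symm

theorem matFun_one (hA : A.IsHermitian) : matFun A hA (fun _ => 1) = 1 := by
  simp only [matFun, Complex.ofReal_one, diagonal_one, Matrix.mul_one]
  exact Unitary.mul_star_self_of_mem hA.eigenvectorUnitary.2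

theorem mpow_zero (hA : A.IsHermitian) : mpow A hA 0 = 1 := by
  simp only [mpow, Real.rpow_zero, matFun_one]

theorem mpow_one (hA : A.IsHermitian) : mpow A hA 1 = A := by
  simp only [mpow, Real.rpow_one, matFun_id]

theorem mpow_two (hA : A.IsHermitian) : mpow A hA 2 = A * A := by
  simp only [mpow, Real.rpow_two, sq, ← matFun_mul, matFun_id]

theorem exists_re_trace_mpow_mul_mpow_two_sub_eq_sum (hA : A.PosDef) (hB : B.PosDef) :
    ∃ w x : Fin n × Fin n → ℝ, (∀ p, 0 ≤ w p) ∧ (∀ p, 0 < x p) ∧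
      ∀ t : ℝ, (trace (mpow A hA.1 t * mpow B hB.1 (2 - t))).re = ∑ p, w p * x p ^ t := by
  set C : Matrix (Fin n) (Fin n) ℂ := star (hA.1.eigenvectorUnitary : Matrix (Fin n) (Fin n) ℂ) *
    (hB.1.eigenvectorUnitary : Matrix (Fin n) (Fin n) ℂ) with hC
  have ha := hA.eigenvalues_pos
  have hb := hB.eigenvalues_pos
  refine ⟨fun p => Complex.normSq (C p.1 p.2) * hB.1.eigenvalues p.2 ^ 2,
    fun p => hA.1.eigenvalues p.1 / hB.1.eigenvalues p.2,
    fun p => mul_nonneg (Complex.normSq_nonneg _) (sq_nonneg _), fun p => div_pos (ha p.1) (hb p.2), fun t => ?_⟩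
  rw [mpow, mpow, re_trace_matFun_mul_matFun, ← hC, Fintype.sum_prod_type]
  refine Finset.sum_congr rfl fun i _ => Finset.sum_congr rfl fun j _ => ?_
  rw [Real.div_rpow (ha i).le (hb j).le, Real.rpow_sub (hb j), Real.rpow_two]
  have := (Real.rpow_pos_of_pos (hb j) t).ne'
  field_simp

end SpectralCalculus

theorem stmt11 {n : ℕ} (A B : Matrix (Fin n) (Fin n) ℂ)
    (hA : A.PosDef) (hB : B.PosDef) (ν : ℝ) (hν : ν ∈ Set.Icc (0:ℝ) 1) :
    (Matrix.trace (mpow A hA.1 (2 * ν) * mpow B hB.1 (2 * (1 - ν)))).re *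
        (Matrix.trace (A * B)).re ^ 2 ≤
      (Matrix.trace (B * B)).re *
        (Matrix.trace (mpow A hA.1 (1 + ν) * mpow B hB.1 (1 - ν))).re ^ 2 := by
  obtain ⟨w, x, hw, hx, htrace⟩ := exists_re_trace_mpow_mul_mpow_two_sub_eq_sum hA hB
  have h2ν := htrace (2 * ν)
  have h1ν := htrace (1 + ν)
  have h1 := htrace 1
  have h0 := htrace 0
  rw [show (2 : ℝ) - 2 * ν = 2 * (1 - ν) by ring] at h2ν
  rw [show (2 : ℝ) - (1 + ν) = 1 - ν by ring] at h1ν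
  norm_num [mpow_zero, mpow_one, mpow_two] at h1 h0
  rw [h2ν, h1ν, h1, h0]
  exact sum_mul_rpow_two_mul_mul_sq_sum_le w x hw hx hν
end

section
/- For positive definite matrices A, B and t ∈ [0,1], the weighted geometric mean A #_t B = A^(1/2)·(A^(-1/2)·B·A^(-1/2))^t·A^(1/2) satisfies δ(A, A #_t B) = t·δ(A,B), where δ(A,B) = ‖log(A^(-1/2)·B·A^(-1/2))‖₂ is the trace metric distance. -/
open Matrix MeasureTheory
open scoped ComplexOrder

/-!
Conjugating by `A^(-1/2)` undoes the outer congruence in `A #_t B`, so the logarithm is taken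
of `M^t` with `M = A^(-1/2) B A^(-1/2)` positive definite. On the positive spectrum of `M`,
`log (x ^ t) = t * log x`, hence `log (M^t) = t • log M`, and the Frobenius norm is absolutely
homogeneous.
-/

section RealCFC

variable {A : Type*} [Ring A] [StarRing A] [Algebra ℝ A] [TopologicalSpace A]
  [ContinuousFunctionalCalculus ℝ A IsSelfAdjoint] {a : A}

lemma cfc_rpow_mul_cfc_rpow_neg (hpos : ∀ x ∈ spectrum ℝ a, 0 < x) (p : ℝ)
    (ha : IsSelfAdjoint a := by cfc_tac) :
    cfc (· ^ p : ℝ → ℝ) a * cfc (· ^ (-p) : ℝ → ℝ) a = 1 := by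
  have hcont (q : ℝ) : ContinuousOn (· ^ q : ℝ → ℝ) (spectrum ℝ a) :=
    continuousOn_id.rpow_const fun x hx => Or.inl (hpos x hx).ne'
  rw [← cfc_mul _ _ a (hcont p) (hcont (-p)), ← cfc_const_one ℝ a]
  exact cfc_congr fun x hx => by simp [← Real.rpow_add (hpos x hx)]

lemma cfc_log_cfc_rpow [ContinuousMap.UniqueHom ℝ A] (hpos : ∀ x ∈ spectrum ℝ a, 0 < x)
    (t : ℝ) (ha : IsSelfAdjoint a := by cfc_tac) :
    cfc Real.log (cfc (· ^ t : ℝ → ℝ) a) = t • cfc Real.log a := by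
  have hlog : ContinuousOn Real.log (spectrum ℝ a) :=
    Real.continuousOn_log.mono fun x hx => (hpos x hx).ne'
  have hlog_rpow : ContinuousOn Real.log ((· ^ t : ℝ → ℝ) '' spectrum ℝ a) :=
    Real.continuousOn_log.mono <| by
      rintro _ ⟨x, hx, rfl⟩
      exact (Real.rpow_pos_of_pos (hpos x hx) t).ne'
  rw [← cfc_comp Real.log _ a ha hlog_rpow
      (continuousOn_id.rpow_const fun x hx => Or.inl (hpos x hx).ne'),
    ← cfc_const_mul t Real.log a hlog]
  exact cfc_congr fun x hx => Real.log_rpow (hpos x hx) t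

end RealCFC

namespace Matrix

variable {ι 𝕜 : Type*} [Fintype ι] [DecidableEq ι] [RCLike 𝕜]

open scoped MatrixOrder in
lemma PosDef.spectrum_pos {A : Matrix ι ι 𝕜} (hA : A.PosDef) : ∀ x ∈ spectrum ℝ A, 0 < x :=
  fun _ hx => hA.isStrictlyPositive.spectrum_pos hx

lemma PosDef.mul_mul_of_isHermitian {B C : Matrix ι ι 𝕜} (hB : B.PosDef) (hC : C.IsHermitian)
    (hCu : IsUnit C) : (C * B * C).PosDef := by
  simpa [hC.eq] using hB.conjTranspose_mul_mul_same (mulVec_injective_iff_isUnit.mpr hCu)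

end Matrix

lemma matFun_eq_cfc {n : ℕ} (A : Matrix (Fin n) (Fin n) ℂ) (hA : A.IsHermitian) (g : ℝ → ℝ) :
    matFun A hA g = cfc g A := by
  rw [hA.cfc_eq]; rfl

lemma mpow_eq_cfc {n : ℕ} (A : Matrix (Fin n) (Fin n) ℂ) (hA : A.IsHermitian) (p : ℝ) :
    mpow A hA p = cfc (· ^ p : ℝ → ℝ) A :=
  matFun_eq_cfc A hA _

lemma frob_smul {n : ℕ} (c : ℝ) (X : Matrix (Fin n) (Fin n) ℂ) : frob (c • X) = |c| * frob X := by
  have hre : ((c * c) • (star X * X).trace).re = c * c * (star X * X).trace.re := by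
    simp
  rw [frob, frob, star_smul, star_trivial, smul_mul_smul_comm, trace_smul, hre,
    Real.sqrt_mul (mul_self_nonneg c), Real.sqrt_mul_self_eq_abs]

theorem stmt18 {n : ℕ} (A B : Matrix (Fin n) (Fin n) ℂ)
    (hA : A.PosDef) (hB : B.PosDef) (t : ℝ) (ht : t ∈ Set.Icc (0:ℝ) 1)
    (hM : (mpow A hA.1 (-(1/2)) * B * mpow A hA.1 (-(1/2))).IsHermitian)
    (hG : (mpow A hA.1 (-(1/2)) *
        (mpow A hA.1 (1/2) * mpow _ hM t * mpow A hA.1 (1/2)) *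
        mpow A hA.1 (-(1/2))).IsHermitian) :
    frob (matFun _ hG Real.log) = t * frob (matFun _ hM Real.log) := by
  simp only [matFun_eq_cfc, mpow_eq_cfc]
  set C := cfc (· ^ (-(1/2) : ℝ) : ℝ → ℝ) A
  set D := cfc (· ^ (1/2 : ℝ) : ℝ → ℝ) A
  have hCD : C * D = 1 := by
    simpa only [neg_neg] using cfc_rpow_mul_cfc_rpow_neg hA.spectrum_pos (-(1/2)) hA.1
  have hDC : D * C = 1 := cfc_rpow_mul_cfc_rpow_neg hA.spectrum_pos (1/2) hA.1
  have hM_pd : (C * B * C).PosDef := hB.mul_mul_of_isHermitian (cfc_predicate _ A)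
    (IsUnit.of_mul_eq_one D hCD)
  have hconj (X : Matrix (Fin n) (Fin n) ℂ) : C * (D * X * D) * C = X := by
    rw [← mul_assoc C, ← mul_assoc C, hCD, one_mul, mul_assoc, hDC, mul_one]
  rw [hconj, cfc_log_cfc_rpow hM_pd.spectrum_pos t hM_pd.1, frob_smul, abs_of_nonneg ht.1]
end
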